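/- arXiv:2404.11136 — 2 statements merged into one kernel-verified Lean document; each statement's English description precedes it below -/
import Mathlib

section
/- If φ_i and φ_j are independent random variables, each uniformly distributed on the interval [−π/2^q, π/2^q] for a positive integer q, then E[cos²(φ_i − φ_j)] = 1/2 + (2^{2q−3}/π²) sin²(π/2^{q−1}). -/
open MeasureTheory ProbabilityTheory
open scoped MeasureTheory

lemma aux_integral_comp {α : Type*} [MeasureSpace α] [IsProbabilityMeasure (ℙ : Measure α)]
    (a : ℝ) (ha : 0 < a) (φ : α → ℝ) (hφ : Measurable φ)
    (hmap : Measure.map φ ℙ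
      = (ENNReal.ofReal (2 * a))⁻¹ • volume.restrict (Set.Icc (-a) a))
    (f : ℝ → ℝ) (hf : Measurable f) :
    ∫ ω, f (φ ω) ∂ℙ = (2 * a)⁻¹ * ∫ x in (-a)..a, f x := by
  have h2a : (0:ℝ) < 2 * a := by linarith
  rw [← integral_map hφ.aemeasurable hf.aestronglyMeasurable, hmap,
    integral_smul_measure, ENNReal.toReal_inv, ENNReal.toReal_ofReal h2a.le,
    MeasureTheory.integral_Icc_eq_integral_Ioc,
    ← intervalIntegral.integral_of_le (by linarith : -a ≤ a)]
  simp [smul_eq_mul]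

/-- If `φᵢ` and `φⱼ` are independent random variables, each uniformly
distributed on `[−π/2^q, π/2^q]` for a positive integer `q`, then
`E[cos²(φᵢ − φⱼ)] = 1/2 + (2^{2q−3}/π²) sin²(π/2^{q−1})`. -/
theorem expectation_cos_sq_diff_uniform_phases
    {α : Type*} [MeasureSpace α] [IsProbabilityMeasure (ℙ : Measure α)]
    (q : ℕ) (hq : 0 < q) (φi φj : α → ℝ) (hφi : Measurable φi) (hφj : Measurable φj)
    (hindep : IndepFun φi φj ℙ)
    (hmapi : Measure.map φi ℙ
      = (ENNReal.ofReal (2 * (Real.pi / 2 ^ q)))⁻¹ •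
          volume.restrict (Set.Icc (-(Real.pi / 2 ^ q)) (Real.pi / 2 ^ q)))
    (hmapj : Measure.map φj ℙ
      = (ENNReal.ofReal (2 * (Real.pi / 2 ^ q)))⁻¹ •
          volume.restrict (Set.Icc (-(Real.pi / 2 ^ q)) (Real.pi / 2 ^ q))) :
    ∫ ω, Real.cos (φi ω - φj ω) ^ 2 ∂ℙ
      = 1 / 2 + (2 : ℝ) ^ (2 * (q : ℤ) - 3) / Real.pi ^ 2
          * Real.sin (Real.pi / (2 : ℝ) ^ ((q : ℤ) - 1)) ^ 2 := by
  set a : ℝ := Real.pi / 2 ^ q with ha_def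
  have ha : 0 < a := by positivity
  have hmc : Measurable fun x : ℝ => Real.cos (2 * x) :=
    Real.measurable_cos.comp (measurable_const.mul measurable_id)
  have hms : Measurable fun x : ℝ => Real.sin (2 * x) :=
    Real.measurable_sin.comp (measurable_const.mul measurable_id)
  -- integrability of bounded measurable functions
  have key : ∀ f : α → ℝ, Measurable f → (∀ ω, |f ω| ≤ 1) → Integrable f ℙ := by
    intro f hf hb
    exact (integrable_const (1:ℝ)).mono' hf.aestronglyMeasurable (Filter.Eventually.of_forall hb)
  -- independence of the composed functions
  have hic : IndepFun (fun ω => Real.cos (2 * φi ω)) (fun ω => Real.cos (2 * φj ω)) ℙ :=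
    hindep.comp hmc hmc
  have his : IndepFun (fun ω => Real.sin (2 * φi ω)) (fun ω => Real.sin (2 * φj ω)) ℙ :=
    hindep.comp hms hms
  have hci : Measurable fun ω => Real.cos (2 * φi ω) := hmc.comp hφi
  have hcj : Measurable fun ω => Real.cos (2 * φj ω) := hmc.comp hφj
  have hsi : Measurable fun ω => Real.sin (2 * φi ω) := hms.comp hφi
  have hsj : Measurable fun ω => Real.sin (2 * φj ω) := hms.comp hφj
  have hIci := key _ hci (fun ω => Real.abs_cos_le_one _)
  have hIcj := key _ hcj (fun ω => Real.abs_cos_le_one _)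
  have hIsi := key _ hsi (fun ω => Real.abs_sin_le_one _)
  have hIsj := key _ hsj (fun ω => Real.abs_sin_le_one _)
  -- product expectations
  have hprodc : ∫ ω, Real.cos (2 * φi ω) * Real.cos (2 * φj ω) ∂ℙ
      = (∫ ω, Real.cos (2 * φi ω) ∂ℙ) * ∫ ω, Real.cos (2 * φj ω) ∂ℙ :=
    ProbabilityTheory.IndepFun.integral_mul_eq_mul_integral hic hIci.aestronglyMeasurable hIcj.aestronglyMeasurable
  have hprods : ∫ ω, Real.sin (2 * φi ω) * Real.sin (2 * φj ω) ∂ℙ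
      = (∫ ω, Real.sin (2 * φi ω) ∂ℙ) * ∫ ω, Real.sin (2 * φj ω) ∂ℙ :=
    ProbabilityTheory.IndepFun.integral_mul_eq_mul_integral his hIsi.aestronglyMeasurable hIsj.aestronglyMeasurable
  -- single expectations
  have hcos2 : ∫ x in (-a)..a, Real.cos (2 * x) = Real.sin (2 * a) := by
    rw [intervalIntegral.integral_comp_mul_left (fun x => Real.cos x) (two_ne_zero)]
    simp [integral_cos]
    ring
  have hsin2 : ∫ x in (-a)..a, Real.sin (2 * x) = 0 := by
    rw [intervalIntegral.integral_comp_mul_left (fun x => Real.sin x) (two_ne_zero)]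
    simp [integral_sin]
  have hEci : ∫ ω, Real.cos (2 * φi ω) ∂ℙ = (2 * a)⁻¹ * Real.sin (2 * a) := by
    rw [aux_integral_comp a ha φi hφi hmapi _ hmc, hcos2]
  have hEcj : ∫ ω, Real.cos (2 * φj ω) ∂ℙ = (2 * a)⁻¹ * Real.sin (2 * a) := by
    rw [aux_integral_comp a ha φj hφj hmapj _ hmc, hcos2]
  have hEsi : ∫ ω, Real.sin (2 * φi ω) ∂ℙ = 0 := by
    rw [aux_integral_comp a ha φi hφi hmapi _ hms, hsin2, mul_zero]
  have hEsj : ∫ ω, Real.sin (2 * φj ω) ∂ℙ = 0 := by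
    rw [aux_integral_comp a ha φj hφj hmapj _ hms, hsin2, mul_zero]
  -- pointwise identity
  have hpt : ∀ ω, Real.cos (φi ω - φj ω) ^ 2
      = 1 / 2 + (1 / 2) * (Real.cos (2 * φi ω) * Real.cos (2 * φj ω)
          + Real.sin (2 * φi ω) * Real.sin (2 * φj ω)) := by
    intro ω
    rw [Real.cos_sq, mul_sub, Real.cos_sub]
    ring
  have hIcc := key _ (hci.mul hcj) (fun ω => by
    rw [Pi.mul_apply, abs_mul]
    exact mul_le_one₀ (Real.abs_cos_le_one _) (abs_nonneg _) (Real.abs_cos_le_one _))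
  have hIss := key _ (hsi.mul hsj) (fun ω => by
    rw [Pi.mul_apply, abs_mul]
    exact mul_le_one₀ (Real.abs_sin_le_one _) (abs_nonneg _) (Real.abs_sin_le_one _))
  calc ∫ ω, Real.cos (φi ω - φj ω) ^ 2 ∂ℙ
      = ∫ ω, (1 / 2 + (1 / 2) * (Real.cos (2 * φi ω) * Real.cos (2 * φj ω)
          + Real.sin (2 * φi ω) * Real.sin (2 * φj ω))) ∂ℙ := by
        exact integral_congr_ae (Filter.Eventually.of_forall hpt)
    _ = 1 / 2 + (1 / 2) * ((∫ ω, Real.cos (2 * φi ω) * Real.cos (2 * φj ω) ∂ℙ)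
          + ∫ ω, Real.sin (2 * φi ω) * Real.sin (2 * φj ω) ∂ℙ) := by
        have hIsum : Integrable (fun ω => Real.cos (2 * φi ω) * Real.cos (2 * φj ω)
            + Real.sin (2 * φi ω) * Real.sin (2 * φj ω)) ℙ := hIcc.add hIss
        have hIfull : Integrable (fun ω => (1:ℝ) / 2 * (Real.cos (2 * φi ω) * Real.cos (2 * φj ω)
            + Real.sin (2 * φi ω) * Real.sin (2 * φj ω))) ℙ := hIsum.const_mul _
        have hsum : ∫ ω, (Real.cos (2 * φi ω) * Real.cos (2 * φj ω)
              + Real.sin (2 * φi ω) * Real.sin (2 * φj ω)) ∂ℙ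
            = (∫ ω, Real.cos (2 * φi ω) * Real.cos (2 * φj ω) ∂ℙ)
              + ∫ ω, Real.sin (2 * φi ω) * Real.sin (2 * φj ω) ∂ℙ := integral_add hIcc hIss
        rw [integral_add (integrable_const _) hIfull, integral_const, integral_const_mul, hsum]
        simp
    _ = 1 / 2 + (1 / 2) * (((2 * a)⁻¹ * Real.sin (2 * a)) ^ 2) := by
        rw [hprodc, hprods, hEci, hEcj, hEsi, hEsj]
        ring
    _ = 1 / 2 + (2 : ℝ) ^ (2 * (q : ℤ) - 3) / Real.pi ^ 2
          * Real.sin (Real.pi / (2 : ℝ) ^ ((q : ℤ) - 1)) ^ 2 := by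
        have h2a : 2 * a = Real.pi / (2 : ℝ) ^ ((q : ℤ) - 1) := by
          rw [ha_def, zpow_sub₀ (two_ne_zero), zpow_one, zpow_natCast]
          field_simp
        have hkey : ((2:ℝ) ^ ((q:ℤ) - 1)) ^ 2 = 2 * (2:ℝ) ^ (2 * (q:ℤ) - 3) := by
          rw [sq, ← zpow_add₀ (two_ne_zero : (2:ℝ) ≠ 0),
            show (2:ℝ) * (2:ℝ) ^ (2 * (q:ℤ) - 3) = (2:ℝ) ^ (1:ℤ) * (2:ℝ) ^ (2 * (q:ℤ) - 3)
              by norm_num,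
            ← zpow_add₀ (two_ne_zero : (2:ℝ) ≠ 0)]
          congr 1
          ring
        have hrw : (2:ℝ) ^ (2 * (q:ℤ) - 3) = ((2:ℝ) ^ ((q:ℤ) - 1)) ^ 2 / 2 := by
          rw [hkey]; ring
        have hπ : Real.pi ≠ 0 := Real.pi_ne_zero
        have hbne : ((2:ℝ) ^ ((q:ℤ) - 1)) ≠ 0 := by positivity
        rw [h2a, hrw]
        field_simp
end

section
/- Let d > 0 and let S be a finite set of points in the Euclidean plane ℝ² such that every point of S lies in a closed disk of radius d and any two distinct points of S are at distance at least d from each other. Then S contains at most 7 points. -/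
open Real Complex Finset

private lemma sep_spread : ∀ (n : ℕ) (A : Finset ℝ) (ε : ℝ), 0 ≤ ε → A.card = n + 1 →
    (∀ x ∈ A, ∀ y ∈ A, x ≠ y → ε ≤ |x - y|) →
    ∃ x ∈ A, ∃ y ∈ A, (n : ℝ) * ε ≤ y - x := by
  intro n
  induction n with
  | zero =>
    intro A ε hε hcard _
    obtain ⟨x, hx⟩ := Finset.card_pos.mp (by omega : 0 < A.card)
    exact ⟨x, hx, x, hx, by simp⟩
  | succ n ih =>
    intro A ε hε hcard hsep
    have hne : A.Nonempty := Finset.card_pos.mp (by omega)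
    set M := A.max' hne with hM
    have hMA : M ∈ A := A.max'_mem hne
    set B := A.erase M with hB
    have hBcard : B.card = n + 1 := by
      rw [hB, Finset.card_erase_of_mem hMA]; omega
    obtain ⟨x, hxB, y, hyB, hxy⟩ := ih B ε hε hBcard
      (fun a ha b hb hab => hsep a (Finset.mem_of_mem_erase ha) b (Finset.mem_of_mem_erase hb) hab)
    have hyA : y ∈ A := Finset.mem_of_mem_erase hyB
    have hyM : y ≠ M := Finset.ne_of_mem_erase hyB
    have h1 : ε ≤ |y - M| := hsep y hyA M hMA hyM
    have h2 : y ≤ M := A.le_max' y hyA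
    have h3 : ε ≤ M - y := by
      rwa [_root_.abs_sub_comm, _root_.abs_of_nonneg (show (0:ℝ) ≤ M - y by linarith)] at h1
    exact ⟨x, Finset.mem_of_mem_erase hxB, M, hMA, by push_cast; linarith⟩

private lemma dist_lt_of_arg_close (d : ℝ) (hd : 0 < d) (u v : ℂ)
    (hu : u ≠ 0) (hv : v ≠ 0)
    (hud : ‖u‖ ≤ d) (hvd : ‖v‖ ≤ d)
    (hang : |u.arg - v.arg| < π / 3) : dist u v < d := by
  have ha : 0 < ‖u‖ := norm_pos_iff.mpr hu
  have hb : 0 < ‖v‖ := norm_pos_iff.mpr hv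
  have hcos : (1:ℝ)/2 < Real.cos (u.arg - v.arg) := by
    rw [← Real.cos_abs]
    have h := Real.cos_lt_cos_of_nonneg_of_le_pi (abs_nonneg (u.arg - v.arg))
      (by linarith [Real.pi_pos] : π / 3 ≤ π) hang
    rwa [Real.cos_pi_div_three] at h
  have key : Real.cos (u.arg - v.arg) * (‖u‖ * ‖v‖)
      = u.re * v.re + u.im * v.im := by
    rw [Real.cos_sub, Complex.cos_arg hu, Complex.sin_arg, Complex.cos_arg hv, Complex.sin_arg]
    field_simp
  have habs2u : ‖u‖ ^ 2 = u.re ^ 2 + u.im ^ 2 := by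
    rw [Complex.sq_norm, Complex.normSq_apply]; ring
  have habs2v : ‖v‖ ^ 2 = v.re ^ 2 + v.im ^ 2 := by
    rw [Complex.sq_norm, Complex.normSq_apply]; ring
  have hdist2 : dist u v ^ 2 = (u.re - v.re) ^ 2 + (u.im - v.im) ^ 2 := by
    rw [Complex.dist_eq, Complex.sq_norm, Complex.normSq_apply]
    simp [Complex.sub_re, Complex.sub_im]
    ring
  have hlt : dist u v ^ 2 < d ^ 2 := by
    nlinarith [mul_nonneg (sub_nonneg.mpr hud) (sub_nonneg.mpr hvd),
      mul_nonneg ha.le (sub_nonneg.mpr hud),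
      mul_nonneg hb.le (sub_nonneg.mpr hvd),
      mul_pos (by linarith : (0:ℝ) < Real.cos (u.arg - v.arg) - 1/2) (mul_pos ha hb)]
  exact lt_of_pow_lt_pow_left₀ 2 hd.le hlt

/-- If `d > 0` and `S` is a finite set of points of the Euclidean plane
contained in a closed disk of radius `d`, with any two distinct points of `S` at distance
at least `d` from each other, then `S` has at most `7` points. -/
theorem packing_in_disk_card_le_seven
    (d : ℝ) (hd : 0 < d) (S : Finset (EuclideanSpace ℝ (Fin 2)))
    (c : EuclideanSpace ℝ (Fin 2))
    (hball : ∀ p ∈ S, dist p c ≤ d)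
    (hsep : ∀ p ∈ S, ∀ q ∈ S, p ≠ q → d ≤ dist p q) :
    S.card ≤ 7 := by
  by_contra hcard
  push_neg at hcard
  set g : EuclideanSpace ℝ (Fin 2) → ℂ := fun p => ⟨p 0 - c 0, p 1 - c 1⟩ with hg
  have hgdist : ∀ p q : EuclideanSpace ℝ (Fin 2), dist (g p) (g q) = dist p q := by
    intro p q
    rw [Complex.dist_eq, Complex.norm_def, Complex.normSq_apply, EuclideanSpace.dist_eq]
    simp only [hg, Complex.sub_re, Complex.sub_im, Real.dist_eq, Fin.sum_univ_two, _root_.sq_abs]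
    congr 1
    ring
  have hgabs : ∀ p : EuclideanSpace ℝ (Fin 2), ‖g p‖ = dist p c := by
    intro p
    rw [Complex.norm_def, Complex.normSq_apply, EuclideanSpace.dist_eq]
    simp only [hg, Real.dist_eq, Fin.sum_univ_two, _root_.sq_abs]
    congr 1
    ring
  have hginj : Set.InjOn g S := by
    intro p _ q _ hpq
    have h0 : p 0 = q 0 := by
      have := congrArg Complex.re hpq
      simp only [hg] at this; linarith
    have h1 : p 1 = q 1 := by
      have := congrArg Complex.im hpq
      simp only [hg] at this; linarith
    ext i
    fin_cases i <;> assumption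
  set T := S.image g with hT
  have hTcard : T.card = S.card := Finset.card_image_of_injOn hginj
  have habs : ∀ w ∈ T, ‖w‖ ≤ d := by
    intro w hw
    obtain ⟨p, hp, rfl⟩ := Finset.mem_image.mp hw
    rw [hgabs]; exact hball p hp
  have hsep' : ∀ u ∈ T, ∀ v ∈ T, u ≠ v → d ≤ dist u v := by
    intro u hu v hv huv
    obtain ⟨p, hp, rfl⟩ := Finset.mem_image.mp hu
    obtain ⟨q, hq, rfl⟩ := Finset.mem_image.mp hv
    rw [hgdist]
    exact hsep p hp q hq (fun h => huv (by rw [h]))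
  set T' := T.erase 0 with hT'
  have hT'card : 7 ≤ T'.card := by
    have h := Finset.pred_card_le_card_erase (a := (0:ℂ)) (s := T)
    rw [hT']
    omega
  have hang : ∀ u ∈ T', ∀ v ∈ T', u ≠ v → π / 3 ≤ |u.arg - v.arg| := by
    intro u hu v hv huv
    by_contra hlt
    push_neg at hlt
    have h1 := dist_lt_of_arg_close d hd u v (Finset.ne_of_mem_erase hu)
      (Finset.ne_of_mem_erase hv) (habs u (Finset.mem_of_mem_erase hu))
      (habs v (Finset.mem_of_mem_erase hv)) hlt
    have h2 := hsep' u (Finset.mem_of_mem_erase hu) v (Finset.mem_of_mem_erase hv) huv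
    linarith
  have harginj : Set.InjOn Complex.arg T' := by
    intro u hu v hv h
    by_contra hne
    have h1 := hang u hu v hv hne
    rw [h] at h1
    simp at h1
    linarith [Real.pi_pos]
  set A := T'.image Complex.arg with hA
  have hAcard : 7 ≤ A.card := by
    rw [hA, Finset.card_image_of_injOn harginj]; exact hT'card
  obtain ⟨A', hA'sub, hA'card⟩ := Finset.exists_subset_card_eq hAcard
  have hsepA : ∀ x ∈ A', ∀ y ∈ A', x ≠ y → π / 3 ≤ |x - y| := by
    intro x hx y hy hxy
    obtain ⟨u, hu, rfl⟩ := Finset.mem_image.mp (hA'sub hx)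
    obtain ⟨v, hv, rfl⟩ := Finset.mem_image.mp (hA'sub hy)
    exact hang u hu v hv (fun h => hxy (by rw [h]))
  obtain ⟨x, hx, y, hy, hxy⟩ := sep_spread 6 A' (π / 3)
    (by positivity) (by omega) hsepA
  have hxb : -π < x := by
    obtain ⟨u, _, rfl⟩ := Finset.mem_image.mp (hA'sub hx)
    exact Complex.neg_pi_lt_arg u
  have hyb : y ≤ π := by
    obtain ⟨u, _, rfl⟩ := Finset.mem_image.mp (hA'sub hy)
    exact Complex.arg_le_pi u
  have h6 : (6 : ℝ) * (π / 3) = 2 * π := by ring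
  linarith
end
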